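/- arXiv:2504.02256 — 3 statements merged into one kernel-verified Lean document; each statement's English description precedes it below -/
import Mathlib

section
/- If L†(A) = λ A for the adjoint Lindblad generator L†, then L†(A†A) − 2 Re(λ) A†A is positive semidefinite. -/
open Matrix ComplexOrder

noncomputable def LmapAdj {n K : Type*} [Fintype n] [DecidableEq n] [Fintype K]
    (H : Matrix n n ℂ) (L : K → Matrix n n ℂ) (A : Matrix n n ℂ) : Matrix n n ℂ :=
  Complex.I • (H * A - A * H) +
    ∑ k, ((L k)ᴴ * A * L k - (1/2 : ℂ) • ((L k)ᴴ * L k * A + A * ((L k)ᴴ * L k)))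

lemma ham_part {n : Type*} [Fintype n] [DecidableEq n]
    (H A : Matrix n n ℂ) (hH : H.IsHermitian) :
    Complex.I • (H * (Aᴴ * A) - (Aᴴ * A) * H)
      - Aᴴ * (Complex.I • (H * A - A * H))
      - (Complex.I • (H * A - A * H))ᴴ * A = 0 := by
  simp only [conjTranspose_smul, conjTranspose_sub, conjTranspose_mul, hH.eq,
    Complex.star_def, Complex.conj_I, mul_smul_comm, smul_mul_assoc, mul_sub, sub_mul,
    smul_sub, neg_smul, neg_mul, mul_assoc]
  module

lemma diss_part {n : Type*} [Fintype n] [DecidableEq n]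
    (M A : Matrix n n ℂ) :
    (Mᴴ * (Aᴴ * A) * M - (1/2 : ℂ) • (Mᴴ * M * (Aᴴ * A) + (Aᴴ * A) * (Mᴴ * M)))
      - Aᴴ * (Mᴴ * A * M - (1/2 : ℂ) • (Mᴴ * M * A + A * (Mᴴ * M)))
      - (Mᴴ * A * M - (1/2 : ℂ) • (Mᴴ * M * A + A * (Mᴴ * M)))ᴴ * A
      = (M * A - A * M)ᴴ * (M * A - A * M) := by
  simp only [conjTranspose_smul, conjTranspose_sub, conjTranspose_add, conjTranspose_mul,
    conjTranspose_conjTranspose, Complex.star_def, map_div₀, _root_.map_one, map_ofNat,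
    mul_smul_comm, smul_mul_assoc, neg_mul, mul_sub, sub_mul, mul_add, add_mul, smul_add,
    smul_sub, mul_assoc]
  module

theorem eigen_dissipation_bound
    {n K : Type*} [Fintype n] [DecidableEq n] [Fintype K]
    (H : Matrix n n ℂ) (hH : H.IsHermitian) (L : K → Matrix n n ℂ)
    (A : Matrix n n ℂ) (lam : ℂ)
    (heig : LmapAdj H L A = lam • A) :
    (LmapAdj H L (Aᴴ * A) - ((2 * lam.re : ℝ) : ℂ) • (Aᴴ * A)).PosSemidef := by
  have h2 : (((2 * lam.re : ℝ) : ℂ)) • (Aᴴ * A)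
      = Aᴴ * (LmapAdj H L A) + (LmapAdj H L A)ᴴ * A := by
    rw [heig]
    simp only [conjTranspose_smul, Complex.star_def, mul_smul_comm, smul_mul_assoc,
      ← add_smul]
    rw [Complex.add_conj]
  have key : LmapAdj H L (Aᴴ * A) - ((2 * lam.re : ℝ) : ℂ) • (Aᴴ * A)
      = ∑ k, (L k * A - A * L k)ᴴ * (L k * A - A * L k) := by
    rw [h2]
    unfold LmapAdj
    rw [show ∀ X Y Z W : Matrix n n ℂ, X + Y - (Aᴴ * (Z + W) + (Z + W)ᴴ * A)
        = (X - Aᴴ * Z - Zᴴ * A) + (Y - Aᴴ * W - Wᴴ * A) from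
      fun X Y Z W => by simp only [conjTranspose_add, mul_add, add_mul]; abel]
    rw [ham_part H A hH, zero_add, conjTranspose_sum, Finset.mul_sum, Finset.sum_mul,
      ← Finset.sum_sub_distrib, ← Finset.sum_sub_distrib]
    exact Finset.sum_congr rfl fun k _ => diss_part (L k) A
  rw [key]
  apply Finset.sum_induction _ _ (fun a b => Matrix.PosSemidef.add) Matrix.PosSemidef.zero
  exact fun k _ => Matrix.posSemidef_conjTranspose_mul_self _
end

section
/- (Contractivity of positive trace-preserving maps in trace norm) Let E be a linear map on n×n complex matrices that preserves positive semidefiniteness and preserves trace. Then for any Hermitian matrix X, the trace norm satisfies ‖E(X)‖₁ ≤ ‖X‖₁, where ‖M‖₁ = Tr√(M†M). -/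
open Matrix ComplexOrder

noncomputable def traceNorm {n : Type*} [Fintype n] [DecidableEq n]
    (M : Matrix n n ℂ) : ℝ :=
  ((((Matrix.posSemidef_conjTranspose_mul_self M).1.eigenvectorUnitary : Matrix n n ℂ) *
      diagonal (((↑) : ℝ → ℂ) ∘ Real.sqrt ∘ (Matrix.posSemidef_conjTranspose_mul_self M).1.eigenvalues) *
      (star ((Matrix.posSemidef_conjTranspose_mul_self M).1.eigenvectorUnitary : Matrix n n ℂ))).trace).re

namespace TraceNormAux

variable {n : Type*} [Fintype n] [DecidableEq n]

lemma star_mul_self_unitary {X : Matrix n n ℂ} (hX : X.IsHermitian) :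
    star (hX.eigenvectorUnitary : Matrix n n ℂ) * (hX.eigenvectorUnitary : Matrix n n ℂ) = 1 :=
  Matrix.mem_unitaryGroup_iff'.mp hX.eigenvectorUnitary.2

lemma mul_star_self_unitary {X : Matrix n n ℂ} (hX : X.IsHermitian) :
    (hX.eigenvectorUnitary : Matrix n n ℂ) * star (hX.eigenvectorUnitary : Matrix n n ℂ) = 1 :=
  Matrix.mem_unitaryGroup_iff.mp hX.eigenvectorUnitary.2

lemma hcfc_mul {X : Matrix n n ℂ} (hX : X.IsHermitian) (f g : ℝ → ℝ) :
    hX.cfc f * hX.cfc g = hX.cfc (fun x => f x * g x) := by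
  rw [Matrix.IsHermitian.cfc, Matrix.IsHermitian.cfc, Matrix.IsHermitian.cfc]
  simp only [Unitary.conjStarAlgAut_apply]
  set U : Matrix n n ℂ := (hX.eigenvectorUnitary : Matrix n n ℂ) with hU
  simp only [mul_assoc]
  rw [← mul_assoc (star U) U, star_mul_self_unitary hX, one_mul,
    ← mul_assoc (diagonal (RCLike.ofReal ∘ f ∘ hX.eigenvalues)), diagonal_mul_diagonal]
  have h : (fun i => (RCLike.ofReal ∘ f ∘ hX.eigenvalues) i * (RCLike.ofReal ∘ g ∘ hX.eigenvalues) i)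
      = (RCLike.ofReal ∘ (fun x => f x * g x) ∘ hX.eigenvalues : n → ℂ) := by
    funext i; simp [Function.comp_apply, RCLike.ofReal_mul, RCLike.ofReal_sub]
  rw [h]

lemma hcfc_psd {X : Matrix n n ℂ} (hX : X.IsHermitian) {f : ℝ → ℝ} (hf : ∀ x, 0 ≤ f x) :
    (hX.cfc f).PosSemidef := by
  rw [Matrix.IsHermitian.cfc]
  simp only [Unitary.conjStarAlgAut_apply]
  rw [show star (hX.eigenvectorUnitary : Matrix n n ℂ)
      = (hX.eigenvectorUnitary : Matrix n n ℂ)ᴴ from rfl]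
  apply Matrix.PosSemidef.mul_mul_conjTranspose_same
  refine Matrix.posSemidef_diagonal_iff.mpr fun i => ?_
  simp only [Function.comp_apply, RCLike.ofReal_nonneg]
  exact hf _

lemma hcfc_trace {X : Matrix n n ℂ} (hX : X.IsHermitian) (f : ℝ → ℝ) :
    (hX.cfc f).trace = ((∑ i, f (hX.eigenvalues i) : ℝ) : ℂ) := by
  rw [Matrix.IsHermitian.cfc, Unitary.conjStarAlgAut_apply, Matrix.trace_mul_cycle, star_mul_self_unitary hX, one_mul,
    Matrix.trace_diagonal]
  push_cast
  rfl

lemma hcfc_sub {X : Matrix n n ℂ} (hX : X.IsHermitian) (f g : ℝ → ℝ) :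
    hX.cfc f - hX.cfc g = hX.cfc (fun x => f x - g x) := by
  rw [Matrix.IsHermitian.cfc, Matrix.IsHermitian.cfc, Matrix.IsHermitian.cfc]
  simp only [Unitary.conjStarAlgAut_apply]
  rw [← sub_mul, ← mul_sub]
  congr 2
  rw [diagonal_sub]
  have h : (fun i => (RCLike.ofReal ∘ f ∘ hX.eigenvalues) i - (RCLike.ofReal ∘ g ∘ hX.eigenvalues) i)
      = (RCLike.ofReal ∘ (fun x => f x - g x) ∘ hX.eigenvalues : n → ℂ) := by
    funext i; simp [Function.comp_apply, RCLike.ofReal_mul, RCLike.ofReal_sub]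
  rw [h]

lemma hcfc_id {X : Matrix n n ℂ} (hX : X.IsHermitian) :
    hX.cfc (fun x => x) = X := by
  rw [Matrix.IsHermitian.cfc]
  exact hX.spectral_theorem.symm

open scoped MatrixOrder in
/-- trace norm of a Hermitian matrix equals sum of |eigenvalues|. -/
lemma traceNorm_eq_sum_abs_eigenvalues {X : Matrix n n ℂ} (hX : X.IsHermitian) :
    traceNorm X = ∑ i, |hX.eigenvalues i| := by
  have hN : (hX.cfc (fun x => |x|)).PosSemidef := hcfc_psd hX (fun x => abs_nonneg x)
  have hsq : (hX.cfc (fun x => |x|)) ^ 2 = Xᴴ * X := by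
    rw [pow_two, hcfc_mul]
    have h1 : (fun x : ℝ => |x| * |x|) = fun x => x * x := funext fun x => abs_mul_abs_self x
    have h2 := hcfc_mul hX (fun x => x) (fun x => x)
    rw [hcfc_id] at h2
    rw [h1, ← h2, hX.eq]
  have hM := Matrix.posSemidef_conjTranspose_mul_self X
  have h : CFC.sqrt (Xᴴ * X) = hX.cfc (fun x => |x|) :=
    CFC.sqrt_unique (by rw [← pow_two, hsq]) hN.nonneg
  have h2 : CFC.sqrt (Xᴴ * X) = hM.1.cfc Real.sqrt := by
    rw [CFC.sqrt_eq_cfc, cfc_nnreal_eq_real _ _ hM.nonneg, hM.1.cfc_eq]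
    congr 1; funext x; rw [Real.sqrt]
  have h3 : traceNorm X = (hM.1.cfc Real.sqrt).trace.re := rfl
  rw [h3, ← h2, h, hcfc_trace]
  simp

lemma psd_diag_nonneg {P : Matrix n n ℂ} (hP : P.PosSemidef) (i : n) : 0 ≤ P i i := by
  exact hP.diag_nonneg

/-- Key estimate: if X = A - B with A, B PSD, then sum of |eigenvalues of X| ≤ re(tr A + tr B). -/
lemma sum_abs_le {X A B : Matrix n n ℂ} (hX : X.IsHermitian)
    (hA : A.PosSemidef) (hB : B.PosSemidef) (hAB : X = A - B) :
    ∑ i, |hX.eigenvalues i| ≤ (A.trace + B.trace).re := by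
  set U : Matrix n n ℂ := (hX.eigenvectorUnitary : Matrix n n ℂ) with hU
  have hA' : (star U * A * U).PosSemidef := by
    exact hA.conjTranspose_mul_mul_same U
  have hB' : (star U * B * U).PosSemidef := by
    exact hB.conjTranspose_mul_mul_same U
  have hdiag : star U * X * U = diagonal (Complex.ofReal ∘ hX.eigenvalues) := by
    conv_lhs => rw [hX.spectral_theorem, Unitary.conjStarAlgAut_apply]
    simp only [hU, ← mul_assoc, star_mul_self_unitary hX, one_mul]
    simp only [mul_assoc, star_mul_self_unitary hX, mul_one]
    rfl
  have key : ∀ i, |hX.eigenvalues i| ≤ ((star U * A * U) i i).re + ((star U * B * U) i i).re := by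
    intro i
    have h1 : (0:ℂ) ≤ (star U * A * U) i i := psd_diag_nonneg hA' i
    have h2 : (0:ℂ) ≤ (star U * B * U) i i := psd_diag_nonneg hB' i
    have h1' : 0 ≤ ((star U * A * U) i i).re := by
      have := (Complex.le_def.mp h1).1; simpa using this
    have h2' : 0 ≤ ((star U * B * U) i i).re := by
      have := (Complex.le_def.mp h2).1; simpa using this
    have heq : (hX.eigenvalues i : ℂ) = (star U * A * U) i i - (star U * B * U) i i := by
      have hsub : star U * X * U = star U * A * U - star U * B * U := by
        rw [hAB]; noncomm_ring
      have := congrArg (fun M => M i i) (hdiag.symm.trans hsub)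
      simpa [diagonal] using this
    have hre := congrArg Complex.re heq
    simp only [Complex.ofReal_re, Complex.sub_re] at hre
    rw [hre]
    calc |((star U * A * U) i i).re - ((star U * B * U) i i).re|
        ≤ |((star U * A * U) i i).re| + |((star U * B * U) i i).re| := abs_sub _ _
      _ = ((star U * A * U) i i).re + ((star U * B * U) i i).re := by
          rw [abs_of_nonneg h1', abs_of_nonneg h2']
  have htrA : ∑ i, ((star U * A * U) i i).re = A.trace.re := by
    have h : (star U * A * U).trace = A.trace := by
      rw [Matrix.trace_mul_cycle, mul_star_self_unitary hX, one_mul]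
    rw [← h, Matrix.trace]
    simp [Matrix.diag]
  have htrB : ∑ i, ((star U * B * U) i i).re = B.trace.re := by
    have h : (star U * B * U).trace = B.trace := by
      rw [Matrix.trace_mul_cycle, mul_star_self_unitary hX, one_mul]
    rw [← h, Matrix.trace]
    simp [Matrix.diag]
  calc ∑ i, |hX.eigenvalues i|
      ≤ ∑ i, (((star U * A * U) i i).re + ((star U * B * U) i i).re) :=
        Finset.sum_le_sum (fun i _ => key i)
    _ = A.trace.re + B.trace.re := by rw [Finset.sum_add_distrib, htrA, htrB]
    _ = (A.trace + B.trace).re := by simp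

end TraceNormAux

open TraceNormAux in
theorem ptp_trace_norm_contractive
    {n : Type*} [Fintype n] [DecidableEq n]
    (E : Matrix n n ℂ →ₗ[ℂ] Matrix n n ℂ)
    (hpos : ∀ R : Matrix n n ℂ, R.PosSemidef → (E R).PosSemidef)
    (htr : ∀ R : Matrix n n ℂ, (E R).trace = R.trace)
    (X : Matrix n n ℂ) (hX : X.IsHermitian) :
    traceNorm (E X) ≤ traceNorm X := by
  set P := hX.cfc (fun x => max x 0) with hP
  set Q := hX.cfc (fun x => max (-x) 0) with hQ
  have hPpsd : P.PosSemidef := hcfc_psd hX (fun x => le_max_right _ _)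
  have hQpsd : Q.PosSemidef := hcfc_psd hX (fun x => le_max_right _ _)
  have hPQ : X = P - Q := by
    rw [hP, hQ, hcfc_sub]
    have h : (fun x : ℝ => max x 0 - max (-x) 0) = (fun x : ℝ => x) := by
      funext x
      rcases le_total x 0 with h | h
      · rw [max_eq_right h, max_eq_left (by linarith), zero_sub, neg_neg]
      · rw [max_eq_left h, max_eq_right (by linarith), sub_zero]
    rw [h, hcfc_id]
  have hEX : E X = E P - E Q := by rw [hPQ, map_sub]
  have hEXherm : (E X).IsHermitian := by
    rw [hEX]
    exact ((hpos P hPpsd).isHermitian).sub ((hpos Q hQpsd).isHermitian)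
  rw [traceNorm_eq_sum_abs_eigenvalues hEXherm, traceNorm_eq_sum_abs_eigenvalues hX]
  calc ∑ i, |hEXherm.eigenvalues i|
      ≤ ((E P).trace + (E Q).trace).re :=
        sum_abs_le hEXherm (hpos P hPpsd) (hpos Q hQpsd) hEX
    _ = (P.trace + Q.trace).re := by rw [htr, htr]
    _ = ∑ i, |hX.eigenvalues i| := by
        rw [hP, hQ, hcfc_trace, hcfc_trace, ← Complex.ofReal_add, Complex.ofReal_re,
          ← Finset.sum_add_distrib]
        refine Finset.sum_congr rfl fun i _ => ?_
        rcases le_total (hX.eigenvalues i) 0 with h | h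
        · rw [max_eq_right h, max_eq_left (by linarith), zero_add, abs_of_nonpos h]
        · rw [max_eq_left h, max_eq_right (by linarith), add_zero, abs_of_nonneg h]
end

section
/- If a linear map E on matrices is trace-preserving and positivity-preserving, then every eigenvalue ε of E associated to a Hermitian eigenvector satisfies |ε| ≤ 1. -/
open Matrix ComplexOrder

-- diagonal entries of PSD matrix are nonneg
lemma psd_trace_nonneg {n : Type*} [Fintype n] {A : Matrix n n ℂ}
    (hA : A.PosSemidef) : 0 ≤ A.trace := by
  classical
  rw [Matrix.trace]
  apply Finset.sum_nonneg
  intro i _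
  exact hA.diag_nonneg

open scoped MatrixOrder in
lemma psd_trace_mul_nonneg {n : Type*} [Fintype n] [DecidableEq n] {P B : Matrix n n ℂ}
    (hP : P.PosSemidef) (hB : B.PosSemidef) : 0 ≤ (P * B).trace := by
  have h1 : P * B = CFC.sqrt P * (CFC.sqrt P * B) := by
    rw [← Matrix.mul_assoc, CFC.sqrt_mul_sqrt_self P hP.nonneg]
  rw [h1, Matrix.trace_mul_comm, Matrix.mul_assoc]
  have h2 : (CFC.sqrt P * B * CFC.sqrt P).PosSemidef := by
    have := hB.mul_mul_conjTranspose_same (CFC.sqrt P)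
    rwa [(CFC.sqrt_nonneg P).posSemidef.1.eq] at this
  rw [← Matrix.mul_assoc]; exact psd_trace_nonneg h2

theorem ptp_eigenvalue_in_unit_disk
    {n : Type*} [Fintype n] [DecidableEq n] [Nonempty n]
    (E : Matrix n n ℂ →ₗ[ℂ] Matrix n n ℂ)
    (hpos : ∀ R : Matrix n n ℂ, R.PosSemidef → (E R).PosSemidef)
    (htr : ∀ R : Matrix n n ℂ, (E R).trace = R.trace)
    (X : Matrix n n ℂ) (hX : X.IsHermitian) (hX0 : X ≠ 0)
    (ε : ℝ) (heig : E X = (ε : ℂ) • X) :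
    |ε| ≤ 1 := by
  classical
  set U : Matrix n n ℂ := (hX.eigenvectorUnitary : Matrix n n ℂ) with hU
  set f : n → ℝ := hX.eigenvalues with hf
  have hUU : Uᴴ * U = 1 := by
    simpa [star_eq_conjTranspose] using
      (Matrix.mem_unitaryGroup_iff'.mp hX.eigenvectorUnitary.2)
  -- the map g ↦ U * diagonal g * Uᴴ
  set M : (n → ℝ) → Matrix n n ℂ :=
    fun g => U * Matrix.diagonal (fun i => (g i : ℂ)) * Uᴴ with hM
  have hMspec : X = M f := by
    simpa [hM, hf, hU, star_eq_conjTranspose, Function.comp_def] using hX.spectral_theorem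
  have hMmul : ∀ g h, M g * M h = M (g * h) := by
    intro g h
    simp only [hM]
    calc U * Matrix.diagonal (fun i => (g i : ℂ)) * Uᴴ *
          (U * Matrix.diagonal (fun i => (h i : ℂ)) * Uᴴ)
        = U * (Matrix.diagonal (fun i => (g i : ℂ)) * (Uᴴ * U) *
            Matrix.diagonal (fun i => (h i : ℂ))) * Uᴴ := by
          simp only [Matrix.mul_assoc]
      _ = U * Matrix.diagonal (fun i => ((g * h) i : ℂ)) * Uᴴ := by
          rw [hUU, Matrix.mul_one, Matrix.diagonal_mul_diagonal]
          simp
  have hMtrace : ∀ g, (M g).trace = ((∑ i, g i : ℝ) : ℂ) := by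
    intro g
    simp only [hM]
    rw [Matrix.trace_mul_cycle, hUU, Matrix.one_mul, Matrix.trace_diagonal]
    push_cast
    rfl
  have hMpsd : ∀ g : n → ℝ, 0 ≤ g → (M g).PosSemidef := by
    intro g hg
    exact (Matrix.PosSemidef.diagonal (fun i => by
      simpa using Complex.zero_le_real.mpr (hg i))).mul_mul_conjTranspose_same U
  -- positive and negative parts
  set fp : n → ℝ := fun i => max (f i) 0 with hfp
  set fm : n → ℝ := fun i => max (-f i) 0 with hfm
  set a : ℝ := ∑ i, fp i with ha
  set b : ℝ := ∑ i, fm i with hb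
  have hfpm : f = fp - fm := by
    funext i; simp only [hfp, hfm, Pi.sub_apply]
    rcases le_total (f i) 0 with h | h
    · rw [max_eq_right h, max_eq_left (by linarith)]; ring
    · rw [max_eq_left h, max_eq_right (by linarith)]; ring
  have hUUT : U * Uᴴ = 1 := by
    simpa [star_eq_conjTranspose] using
      (Matrix.mem_unitaryGroup_iff.mp hX.eigenvectorUnitary.2)
  have hMone : M (fun _ => (1 : ℝ)) = 1 := by
    simp only [hM, Complex.ofReal_one, Matrix.diagonal_one, Matrix.mul_one]
    exact hUUT
  have hMsub : ∀ g h : n → ℝ, M g - M h = M (g - h) := by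
    intro g h
    simp only [hM]
    rw [← Matrix.sub_mul, ← Matrix.mul_sub]
    congr 2
    ext i j
    by_cases hij : i = j <;> simp [Matrix.diagonal, hij]
  -- key bound: for 0 ≤ p ≤ 1 and PSD Y, 0 ≤ tr (M p * Y) ≤ tr Y
  have key : ∀ p : n → ℝ, 0 ≤ p → p ≤ 1 → ∀ Y : Matrix n n ℂ, Y.PosSemidef →
      0 ≤ (M p * Y).trace ∧ (M p * Y).trace ≤ Y.trace := by
    intro p hp0 hp1 Y hY
    refine ⟨psd_trace_mul_nonneg (hMpsd p hp0) hY, ?_⟩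
    have h1 : 0 ≤ (M ((fun _ => (1:ℝ)) - p) * Y).trace :=
      psd_trace_mul_nonneg (hMpsd _ (fun i => by simpa using hp1 i)) hY
    rw [← hMsub, hMone, Matrix.sub_mul, Matrix.one_mul, Matrix.trace_sub] at h1
    exact sub_nonneg.mp h1
  -- the projection functions
  set g : n → ℝ := fun i => if 0 ≤ f i then 1 else 0 with hg
  set g' : n → ℝ := fun i => 1 - g i with hg'
  have hg0 : 0 ≤ g := fun i => by by_cases h : 0 ≤ f i <;> simp [hg, h]
  have hg1 : g ≤ 1 := fun i => by by_cases h : 0 ≤ f i <;> simp [hg, h]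
  have hg'0 : 0 ≤ g' := fun i => by simpa [hg'] using hg1 i
  have hg'1 : g' ≤ 1 := fun i => by
    have h0 : (0:ℝ) ≤ g i := by simpa using hg0 i
    simp only [hg', Pi.one_apply]; linarith
  have hgf : g * f = fp := by
    funext i
    by_cases h : 0 ≤ f i
    · simp [hg, hfp, h, max_eq_left h]
    · push_neg at h
      simp [hg, hfp, not_le.mpr h, max_eq_right (le_of_lt h)]
  have hg'f : g' * f = -fm := by
    funext i
    by_cases h : 0 ≤ f i
    · simp [hg', hg, hfm, h, max_eq_right (by linarith : -f i ≤ 0)]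
    · push_neg at h
      simp [hg', hg, hfm, not_le.mpr h, max_eq_left (by linarith : 0 ≤ -f i)]
  -- positive and negative part matrices
  have hfp0 : 0 ≤ fp := fun i => le_max_right _ _
  have hfm0 : 0 ≤ fm := fun i => le_max_right _ _
  have hXsub : X = M fp - M fm := by rw [hMspec, hfpm, hMsub]
  have hEX : E X = E (M fp) - E (M fm) := by rw [hXsub, map_sub]
  have hEXp : (E (M fp)).PosSemidef := hpos _ (hMpsd _ hfp0)
  have hEXm : (E (M fm)).PosSemidef := hpos _ (hMpsd _ hfm0)
  have htrp : (E (M fp)).trace = (a : ℂ) := by rw [htr, hMtrace, ha]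
  have htrm : (E (M fm)).trace = (b : ℂ) := by rw [htr, hMtrace, hb]
  -- the four trace bounds
  obtain ⟨hA1₀, hA1⟩ := key g hg0 hg1 _ hEXp
  obtain ⟨hA2₀, hA2⟩ := key g hg0 hg1 _ hEXm
  obtain ⟨hB1₀, hB1⟩ := key g' hg'0 hg'1 _ hEXp
  obtain ⟨hB2₀, hB2⟩ := key g' hg'0 hg'1 _ hEXm
  rw [htrp] at hA1 hB1
  rw [htrm] at hA2 hB2
  -- trace identities
  have htrMgX : ∀ p : n → ℝ, (M p * X).trace = ((∑ i, (p * f) i : ℝ) : ℂ) := by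
    intro p
    rw [hMspec, hMmul, hMtrace]
  have hεa : ((ε * a : ℝ) : ℂ) = (M g * E (M fp)).trace - (M g * E (M fm)).trace := by
    have h1 : (M g * E X).trace = ((ε : ℂ)) * (M g * X).trace := by
      rw [heig, Matrix.mul_smul, Matrix.trace_smul, smul_eq_mul]
    rw [hEX, Matrix.mul_sub, Matrix.trace_sub] at h1
    rw [h1, htrMgX, hgf, ← ha]
    push_cast
    ring
  have hεb : ((-(ε * b) : ℝ) : ℂ) = (M g' * E (M fp)).trace - (M g' * E (M fm)).trace := by
    have h1 : (M g' * E X).trace = ((ε : ℂ)) * (M g' * X).trace := by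
      rw [heig, Matrix.mul_smul, Matrix.trace_smul, smul_eq_mul]
    rw [hEX, Matrix.mul_sub, Matrix.trace_sub] at h1
    rw [h1, htrMgX, hg'f]
    have h2 : (∑ i, (-fm) i) = -b := by simp [hb]
    rw [h2]
    push_cast
    ring
  -- four real inequalities
  have r1 : ε * a ≤ a := by
    rw [← Complex.real_le_real, hεa]
    calc (M g * E (M fp)).trace - (M g * E (M fm)).trace
        ≤ (M g * E (M fp)).trace := sub_le_self _ hA2₀
      _ ≤ (a : ℂ) := hA1
  have r2 : -b ≤ ε * a := by
    rw [← Complex.real_le_real, hεa, Complex.ofReal_neg]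
    calc -(b : ℂ) ≤ -(M g * E (M fm)).trace := neg_le_neg hA2
      _ = 0 - (M g * E (M fm)).trace := by ring
      _ ≤ (M g * E (M fp)).trace - (M g * E (M fm)).trace := sub_le_sub_right hA1₀ _
  have r3 : -(ε * b) ≤ a := by
    rw [← Complex.real_le_real, hεb]
    calc (M g' * E (M fp)).trace - (M g' * E (M fm)).trace
        ≤ (M g' * E (M fp)).trace := sub_le_self _ hB2₀
      _ ≤ (a : ℂ) := hB1
  have r4 : -b ≤ -(ε * b) := by
    rw [← Complex.real_le_real, hεb, Complex.ofReal_neg]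
    calc -(b : ℂ) ≤ -(M g' * E (M fm)).trace := neg_le_neg hB2
      _ = 0 - (M g' * E (M fm)).trace := by ring
      _ ≤ (M g' * E (M fp)).trace - (M g' * E (M fm)).trace := sub_le_sub_right hB1₀ _
  -- a, b nonneg, a + b > 0
  have ha0 : 0 ≤ a := Finset.sum_nonneg fun i _ => hfp0 i
  have hb0 : 0 ≤ b := Finset.sum_nonneg fun i _ => hfm0 i
  have hfne : f ≠ 0 := by
    intro h
    apply hX0
    rw [hMspec, h]
    simp only [hM]
    simp
  obtain ⟨i₀, hi₀⟩ := Function.ne_iff.mp hfne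
  have hab : 0 < a + b := by
    have h1 : 0 < fp i₀ + fm i₀ := by
      rcases lt_or_gt_of_ne hi₀ with h | h
      · have h2 : 0 < fm i₀ := by
          simp only [hfm, lt_sup_iff]
          left; simpa using h
        have h3 : 0 ≤ fp i₀ := hfp0 i₀
        linarith
      · have h2 : 0 < fp i₀ := by
          simp only [hfp, lt_sup_iff]
          left; simpa using h
        have h3 : 0 ≤ fm i₀ := hfm0 i₀
        linarith
    have h2 : a + b = ∑ i, (fp i + fm i) := by rw [ha, hb, Finset.sum_add_distrib]
    rw [h2]
    exact Finset.sum_pos' (fun i _ => by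
        have h3 : (0:ℝ) ≤ fp i := by simpa using hfp0 i
        have h4 : (0:ℝ) ≤ fm i := by simpa using hfm0 i
        linarith)
      ⟨i₀, Finset.mem_univ _, h1⟩
  -- conclude
  rcases abs_cases ε with ⟨h1, h2⟩ | ⟨h1, h2⟩ <;> rw [h1] <;> nlinarith
end
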